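/- arXiv:1912.06702 — 4 statements merged into one kernel-verified Lean document; each statement's English description precedes it below -/
import Mathlib

section
/- For all secondary colors p = a_r a_s (with r < s) and q = a_x a_y (with x < y), the minimum of k − l over all pairs of integers (k, l) such that β(k_p) ≻ α(l_q) equals χ(r ≤ y) + χ(r ≤ x)·χ(s ≤ y), and this quantity equals Δ(p, q) := 1 + χ(p ≤ q) − χ((p,q) ∈ SP), the minimal value of k − l for which k_p ≫ l_q holds. -/
open Classical in
/-- `χ(P)` is `1` if `P` holds and `0` otherwise. -/
noncomputable def chi (P : Prop) : ℤ := if P then 1 else 0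

/-- Colors: `Sum.inl i` is the primary color `a_i`; `Sum.inr (i, j)` (with `i < j`)
is the secondary color `a_i a_j`. -/
abbrev Col := ℕ ⊕ (ℕ × ℕ)

/-- A colored part: an integer size together with a color. -/
structure CPart where
  size : ℤ
  col : Col

/-- Numerical key realizing the total order
`a_1a_2 < ⋯ < a_1a_n < a_1 < a_2a_3 < ⋯ < a_{n-1}a_n < a_{n-1} < a_n`
on the primary and secondary colors (for indices in `[1, n]`). -/
def colKey (n : ℕ) : Col → ℕ
  | Sum.inl i => i * (n + 2) + (n + 1)
  | Sum.inr (i, j) => i * (n + 2) + j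

/-- Order `p ≤ q` on colors. -/
def colLE (n : ℕ) (p q : Col) : Prop := colKey n p ≤ colKey n q

/-- Order `p < q` on colors. -/
def colLT (n : ℕ) (p q : Col) : Prop := colKey n p < colKey n q

def isPri : Col → Prop := fun c => ∃ i, c = Sum.inl i

/-- Special pairs of secondary colors:
`(a_r a_s, a_x a_y)` with `x < y < r < s` or `r < x < y < s`. -/
def SP : Col → Col → Prop
  | Sum.inr (r, s), Sum.inr (x, y) => (x < y ∧ y < r ∧ r < s) ∨ (r < x ∧ x < y ∧ y < s)
  | _, _ => False

/-- `x ≻ y`, i.e. `k_p ≻ l_q ↔ k - l ≥ χ(p ≤ q)`. -/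
def succR (n : ℕ) (x y : CPart) : Prop := chi (colLE n x.col y.col) ≤ x.size - y.size

/-- `x ⪰ y` (i.e. `x ≻ y` or `x = y`), equivalently `k - l ≥ χ(p < q)`. -/
def succeqR (n : ℕ) (x y : CPart) : Prop := chi (colLT n x.col y.col) ≤ x.size - y.size

/-- Add an integer to the size of a part (the color is unchanged). -/
def shift (x : CPart) (m : ℤ) : CPart := ⟨x.size + m, x.col⟩

/-- `x ▷ y` : `k_p ⪰ (l+1)_q` if `p` or `q` is primary, `k_p ≻ (l+1)_q` if both secondary. -/
def rtri (n : ℕ) (x y : CPart) : Prop :=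
  ((isPri x.col ∨ isPri y.col) ∧ succeqR n x (shift y 1)) ∨
  (¬(isPri x.col ∨ isPri y.col) ∧ succR n x (shift y 1))

/-- `x ≫ y` : `k_p ⪰ (l+1)_q` if `p` or `q` is primary; `k_p ≻ (l+1)_q` if both
secondary with `(p,q) ∉ SP`; `k_p ≻ l_q` if `(p,q) ∈ SP`. -/
def gg (n : ℕ) (x y : CPart) : Prop :=
  ((isPri x.col ∨ isPri y.col) ∧ succeqR n x (shift y 1)) ∨
  (¬(isPri x.col ∨ isPri y.col) ∧ ¬ SP x.col y.col ∧ succR n x (shift y 1)) ∨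
  (SP x.col y.col ∧ succR n x y)

/-- Upper half `α` of a secondary part of size `k` and color `a_i a_j`:
`α((2m)_{a_ia_j}) = m_{a_j}`, `α((2m+1)_{a_ia_j}) = (m+1)_{a_i}`. -/
def alphaP (k : ℤ) (i j : ℕ) : CPart :=
  if k % 2 = 0 then ⟨k / 2, Sum.inl j⟩ else ⟨(k + 1) / 2, Sum.inl i⟩

/-- Lower half `β` of a secondary part of size `k` and color `a_i a_j`:
`β((2m)_{a_ia_j}) = m_{a_i}`, `β((2m+1)_{a_ia_j}) = m_{a_j}`. -/
def betaP (k : ℤ) (i j : ℕ) : CPart :=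
  if k % 2 = 0 then ⟨k / 2, Sum.inl i⟩ else ⟨(k - 1) / 2, Sum.inl j⟩

/-- `Δ(p, q) = 1 + χ(p ≤ q) - χ((p,q) ∈ SP)`. -/
noncomputable def Delta (n : ℕ) (p q : Col) : ℤ :=
  1 + chi (colLE n p q) - chi (SP p q)

/-- Members of `P`: parts of positive size with a (valid) primary color. -/
def inP (n : ℕ) (x : CPart) : Prop :=
  1 ≤ x.size ∧ ∃ i, 1 ≤ i ∧ i ≤ n ∧ x.col = Sum.inl i

/-- Members of `S`: parts of size at least 2 with a (valid) secondary color. -/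
def inS (n : ℕ) (x : CPart) : Prop :=
  2 ≤ x.size ∧ ∃ i j, 1 ≤ i ∧ i < j ∧ j ≤ n ∧ x.col = Sum.inr (i, j)

/-- `O`: sequences `λ_1 ≻ ⋯ ≻ λ_t` of parts in `P`. -/
def memO (n : ℕ) (l : List CPart) : Prop :=
  (∀ x ∈ l, inP n x) ∧ l.Chain' (succR n)

/-- `E`: sequences `ν_1 ≫ ⋯ ≫ ν_t` of parts in `P ⊔ S`. -/
def memE (n : ℕ) (l : List CPart) : Prop :=
  (∀ x ∈ l, inP n x ∨ inS n x) ∧ l.Chain' (gg n)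

/-- `E₂`: sequences `ν_1 ▷ ⋯ ▷ ν_t` of parts in `P ⊔ S`. -/
def memE2 (n : ℕ) (l : List CPart) : Prop :=
  (∀ x ∈ l, inP n x ∨ inS n x) ∧ l.Chain' (rtri n)

/-- The size of a partition: the sum of the sizes of its parts. -/
def psize (l : List CPart) : ℤ := (l.map CPart.size).sum

/-- The multiset of primary-color indices contributed by one color. -/
def colContrib : Col → Multiset ℕ
  | Sum.inl i => {i}
  | Sum.inr (i, j) => {i, j}

/-- The color product of a partition, as a multiset of primary-color indices. -/
def colorProd (l : List CPart) : Multiset ℕ := (l.map (fun x => colContrib x.col)).sum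

/-- The expanded sequence of a partition: each primary part is kept (tag `0`); each
secondary part is replaced by its upper half (tag `1`) followed by its lower half
(tag `2`). The third component records the original part. -/
def expandTag (l : List CPart) : List (CPart × ℕ × CPart) :=
  (l.map (fun x =>
    match x.col with
    | Sum.inl _ => [(x, 0, x)]
    | Sum.inr (i, j) => [(alphaP x.size i j, 1, x), (betaP x.size i j, 2, x)])).flatten

/-- Length `p + 2s` of the expanded sequence. -/
def elen (l : List CPart) : ℕ := (expandTag l).length

/-- `ν_x` (1-based indexing in the expanded sequence), with the convention
`ν_{p+2s+1} = 0_{a_n}` (and the same default beyond). -/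
def nuAt (n : ℕ) (l : List CPart) (x : ℕ) : CPart :=
  ((expandTag l).getD (x - 1) (⟨0, Sum.inl n⟩, 3, ⟨0, Sum.inl n⟩)).1

/-- The tag of position `x` (1-based): `0` primary, `1` upper half, `2` lower half,
`3` out of range. -/
def tagAt (l : List CPart) (x : ℕ) : ℕ :=
  ((expandTag l).getD (x - 1) (⟨0, Sum.inl 0⟩, 3, ⟨0, Sum.inl 0⟩)).2.1

/-- The original (primary or secondary) part occupying position `x`. -/
def origAt (n : ℕ) (l : List CPart) (x : ℕ) : CPart :=
  ((expandTag l).getD (x - 1) (⟨0, Sum.inl n⟩, 3, ⟨0, Sum.inl n⟩)).2.2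

/-- `I`: the set of (1-based) indices of upper halves of secondary parts. -/
def Iset (l : List CPart) : Set ℕ := {x | 1 ≤ x ∧ tagAt l x = 1}

/-- `J`: the set of (1-based) indices of primary parts. -/
def Jset (l : List CPart) : Set ℕ := {x | 1 ≤ x ∧ tagAt l x = 0}

/-- `j = min((i, p+2s+1] ∩ (J ∪ {p+2s+1}))`. -/
noncomputable def nextJ (l : List CPart) (i : ℕ) : ℕ :=
  sInf {x | i < x ∧ (x ∈ Jset l ∨ x = elen l + 1)}

/-- The condition `ν_{i'+1} ⊁ ν_u + (u - i')/2 - 1` for all `i' ∈ [i, u) ∩ I`. -/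
def brCond (n : ℕ) (l : List CPart) (i u : ℕ) : Prop :=
  ∀ i' ∈ Iset l, i ≤ i' → i' < u →
    ¬ succR n (nuAt n l (i' + 1)) (shift (nuAt n l u) (((u : ℤ) - (i' : ℤ)) / 2 - 1))

open Classical in
/-- The Bridge `Br_ν(i)`. -/
noncomputable def Br (n : ℕ) (l : List CPart) (i : ℕ) : ℕ :=
  if brCond n l i (nextJ l i) then nextJ l i
  else if {u | u ∈ Iset l ∧ i < u ∧ u < nextJ l i ∧ brCond n l i u}.Nonempty then
    sSup {u | u ∈ Iset l ∧ i < u ∧ u < nextJ l i ∧ brCond n l i u}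
  else i

/-- `TS(ν)`: indices of the troublesome secondary parts. -/
def TSet (n : ℕ) (l : List CPart) : Set ℕ :=
  {i | i ∈ Iset l ∧ (i + 2) ∈ Iset l ∧
    ¬ rtri n (origAt n l i) (origAt n l (i + 2)) ∧
    (i = 1 ∨ rtri n (origAt n l (i - 1)) (origAt n l i))}

/-- `E₁`: partitions in `E` such that for every `i ∈ TS(ν)` with `Br_ν(i) > i` one has
`ν_i + ν_{i+1} ≻ ν_{Br_ν(i)} + (Br_ν(i) - i)/2`. -/
def memE1 (n : ℕ) (l : List CPart) : Prop :=
  memE n l ∧ ∀ i ∈ TSet n l, i < Br n l i →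
    succR n (origAt n l i)
      (shift (nuAt n l (Br n l i)) (((Br n l i : ℤ) - (i : ℤ)) / 2))

/-- `hasIdx i c` : the color `c` contains the primary color `a_i`. -/
def hasIdx (i : ℕ) : Col → Bool
  | Sum.inl j => j == i
  | Sum.inr (j, k) => j == i || k == i

/-- Number of parts of `l` whose color contains `a_i`. -/
def countIdx (i : ℕ) (l : List CPart) : ℕ := l.countP (fun x => hasIdx i x.col)

/-- A partition into `u` distinct positive parts. -/
def distinctParts (u : ℕ) (l : List ℕ) : Prop :=
  l.Chain' (· > ·) ∧ (∀ x ∈ l, 0 < x) ∧ l.length = u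


/-!
Write `k = 2u + ε` and `l = 2v - δ` with `ε, δ ∈ {0, 1}`. Then `β(k_p)` is `u_{a_r}` or `u_{a_s}`
and `α(l_q)` is `v_{a_y}` or `v_{a_x}`, so `β(k_p) ≻ α(l_q)` reads `u - v ≥ χ(c ≤ c')` for the
corresponding primary indices `c, c'`, while `k - l = 2(u - v) + ε + δ`. The four parities give
the lower bound, and each value is attained with `0 ≤ k ≤ 2`. The identification with `Δ(p, q)`
is a case check, the order on secondary colors being lexicographic.
-/

lemma colLE_inl_inl_iff (n i j : ℕ) : colLE n (.inl i) (.inl j) ↔ i ≤ j := by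
  simp [colLE, colKey]

lemma colLE_inr_inr_iff {n r s x y : ℕ} (hs : s ≤ n + 1) (hy : y ≤ n + 1) :
    colLE n (.inr (r, s)) (.inr (x, y)) ↔ r < x ∨ r = x ∧ s ≤ y := by
  simp only [colLE, colKey]
  constructor
  · intro h
    rcases lt_trichotomy r x with hlt | rfl | hgt
    · exact .inl hlt
    · exact .inr ⟨rfl, by omega⟩
    · have : x + 1 ≤ r := hgt
      nlinarith
  · rintro (hlt | ⟨rfl, h⟩)
    · have : r + 1 ≤ x := hlt
      nlinarith
    · omega

lemma succR_inl_inl_iff (n i j : ℕ) (k l : ℤ) :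
    succR n ⟨k, .inl i⟩ ⟨l, .inl j⟩ ↔ chi (i ≤ j) ≤ k - l := by
  simp only [succR, colLE_inl_inl_iff]

lemma betaP_two_mul (a : ℤ) (i j : ℕ) : betaP (2 * a) i j = ⟨a, .inl i⟩ := by
  simp [betaP]

lemma betaP_two_mul_add_one (a : ℤ) (i j : ℕ) : betaP (2 * a + 1) i j = ⟨a, .inl j⟩ := by
  simp [betaP]

lemma alphaP_two_mul (b : ℤ) (i j : ℕ) : alphaP (2 * b) i j = ⟨b, .inl j⟩ := by
  simp [alphaP]

lemma alphaP_two_mul_add_one (b : ℤ) (i j : ℕ) : alphaP (2 * b + 1) i j = ⟨b + 1, .inl i⟩ := by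
  simp [alphaP]
  omega

lemma chi_le_sub_of_succR_betaP_alphaP {n r s x y : ℕ} (hxy : x ≤ y) {k l : ℤ}
    (h : succR n (betaP k r s) (alphaP l x y)) :
    chi (r ≤ y) + chi (r ≤ x) * chi (s ≤ y) ≤ k - l := by
  obtain ⟨a, rfl | rfl⟩ := Int.even_or_odd' k <;> obtain ⟨b, rfl | rfl⟩ := Int.even_or_odd' l <;>
    simp only [betaP_two_mul, betaP_two_mul_add_one, alphaP_two_mul, alphaP_two_mul_add_one,
      succR_inl_inl_iff, chi] at h ⊢ <;>
    split_ifs at h ⊢ <;> omega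

lemma exists_succR_betaP_alphaP {n r s x y : ℕ} (hxy : x ≤ y) :
    ∃ k l : ℤ, succR n (betaP k r s) (alphaP l x y) ∧
      k - l = chi (r ≤ y) + chi (r ≤ x) * chi (s ≤ y) := by
  refine
    if hry : r ≤ y then
      if hrx : r ≤ x then
        if hsy : s ≤ y then ⟨2 * 1, 2 * 0, ?_, ?_⟩ else ⟨2 * 0 + 1, 2 * 0, ?_, ?_⟩
      else ⟨2 * 0, 2 * (-1) + 1, ?_, ?_⟩
    else ⟨2 * 0, 2 * 0, ?_, ?_⟩
  all_goals
    simp only [betaP_two_mul, betaP_two_mul_add_one, alphaP_two_mul, alphaP_two_mul_add_one,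
      succR_inl_inl_iff, chi]
    split_ifs <;> omega

lemma Delta_inr_inr {n r s x y : ℕ} (hrs : r < s) (hxy : x < y) (hs : s ≤ n + 1)
    (hy : y ≤ n + 1) :
    Delta n (.inr (r, s)) (.inr (x, y)) = chi (r ≤ y) + chi (r ≤ x) * chi (s ≤ y) := by
  rw [Delta, colLE_inr_inr_iff hs hy]
  unfold SP chi
  split_ifs <;> omega

theorem stmt_8_general (n r s x y : ℕ) (hrs : r < s) (hsn : s ≤ n)
    (hxy : x < y) (hyn : y ≤ n) :
    IsLeast {d : ℤ | ∃ k l : ℤ, succR n (betaP k r s) (alphaP l x y) ∧ d = k - l}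
        (chi (r ≤ y) + chi (r ≤ x) * chi (s ≤ y)) ∧
      chi (r ≤ y) + chi (r ≤ x) * chi (s ≤ y) =
        Delta n (Sum.inr (r, s)) (Sum.inr (x, y)) := by
  refine ⟨⟨?_, ?_⟩, (Delta_inr_inr hrs hxy (by omega) (by omega)).symm⟩
  · obtain ⟨k, l, h, hkl⟩ := exists_succR_betaP_alphaP (n := n) (r := r) (s := s) hxy.le
    exact ⟨k, l, h, hkl.symm⟩
  · rintro d ⟨k, l, h, rfl⟩
    exact chi_le_sub_of_succR_betaP_alphaP hxy.le h

/-- For secondary colors `p = a_r a_s` and `q = a_x a_y`, the minimum of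
`k − l` over all integer pairs with `β(k_p) ≻ α(l_q)` equals
`χ(r ≤ y) + χ(r ≤ x)·χ(s ≤ y)`, and this equals `Δ(p, q) = 1 + χ(p ≤ q) − χ((p,q) ∈ SP)`. -/
theorem stmt_8 (n r s x y : ℕ) (hr : 1 ≤ r) (hrs : r < s) (hsn : s ≤ n)
    (hx : 1 ≤ x) (hxy : x < y) (hyn : y ≤ n) :
    IsLeast {d : ℤ | ∃ k l : ℤ, succR n (betaP k r s) (alphaP l x y) ∧ d = k - l}
        (chi (r ≤ y) + chi (r ≤ x) * chi (s ≤ y)) ∧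
      chi (r ≤ y) + chi (r ≤ x) * chi (s ≤ y) =
        Delta n (Sum.inr (r, s)) (Sum.inr (x, y)) :=
  stmt_8_general n r s x y hrs hsn hxy hyn
end

section
/- Let ν ∈ E with associated index sets I and J and Bridge function Br_ν. Then Br_ν is non-decreasing on I (i.e., for i ≤ i' in I, Br_ν(i) ≤ Br_ν(i')), and for every i ∈ I such that Br_ν(i) ∈ I, one has Br_ν(Br_ν(i)) = Br_ν(i). -/
/-!
`Br_ν(i)` is the greatest of `i` and the candidates `u ∈ (S_i ∪ {j})` satisfying the bridge
condition for `(i, u)`. Reading `≻` as the strict lexicographic order on (size, color), an upper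
half `ν_b` is at most `ν_{b+1} + 1`; together with `⌊(u-b)/2⌋ + ⌊(b-i')/2⌋ ≤ ⌊(u-i')/2⌋` this
makes the bridge condition transitive through any `b ∈ I`. Monotonicity holds because a candidate
of `i` lying beyond `i'` is a candidate of `i'` (same `j`, fewer constraints); idempotence because,
by transitivity, a candidate of `Br_ν(i) ∈ I` would be a candidate of `i` beyond `Br_ν(i)`.
-/

def CPart.key (n : ℕ) (x : CPart) : ℤ ×ₗ ℕ := toLex (x.size, colKey n x.col)

section

variable {n : ℕ} {l : List CPart}

lemma tagAt_of_elen_lt {x : ℕ} (hx : elen l < x) : tagAt l x = 3 := by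
  rw [tagAt, List.getD_eq_default _ _ (by rw [← elen]; omega)]

lemma le_elen_of_mem_Iset {x : ℕ} (hx : x ∈ Iset l) : x ≤ elen l := by
  by_contra! h
  have := hx.2
  rw [tagAt_of_elen_lt h] at this
  omega

lemma getElem?_expandTag_of_upper {t : ℕ} {a x : CPart}
    (h : (expandTag l)[t]? = some (a, 1, x)) :
    x ∈ l ∧ ∃ i j, x.col = Sum.inr (i, j) ∧ a = alphaP x.size i j ∧
      (expandTag l)[t + 1]? = some (betaP x.size i j, 2, x) := by
  induction l generalizing t with
  | nil => simp [expandTag] at h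
  | cons y l ih =>
    rcases hy : y.col with i | ⟨i, j⟩
    · have he : expandTag (y :: l) = (y, 0, y) :: expandTag l := by simp [expandTag, hy]
      rw [he] at h ⊢
      cases t with
      | zero => simp at h
      | succ t =>
        obtain ⟨hx, hrest⟩ := ih h
        exact ⟨List.mem_cons_of_mem _ hx, by simpa using hrest⟩
    · have he : expandTag (y :: l) =
          (alphaP y.size i j, 1, y) :: (betaP y.size i j, 2, y) :: expandTag l := by
        simp [expandTag, hy]
      rw [he] at h ⊢
      match t, h with
      | 0, h =>
        simp only [List.getElem?_cons_zero, Option.some.injEq, Prod.mk.injEq] at h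
        obtain ⟨rfl, -, rfl⟩ := h
        exact ⟨List.mem_cons_self, i, j, hy, rfl, rfl⟩
      | 1, h => simp at h
      | t + 2, h =>
        obtain ⟨hx, hrest⟩ := ih h
        exact ⟨List.mem_cons_of_mem _ hx, by simpa using hrest⟩

lemma exists_nuAt_eq_alphaP (hl : ∀ x ∈ l, inP n x ∨ inS n x)
    {b : ℕ} (hb : b ∈ Iset l) :
    ∃ k i j, i < j ∧ nuAt n l b = alphaP k i j ∧ nuAt n l (b + 1) = betaP k i j := by
  obtain ⟨hb_pos, hb⟩ := hb
  rw [tagAt, List.getD_eq_getElem?_getD] at hb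
  rcases he : (expandTag l)[b - 1]? with _ | ⟨a, t, x⟩
  · simp [he] at hb
  obtain rfl : t = 1 := by simpa [he] using hb
  obtain ⟨hx, i, j, hcol, rfl, hnext⟩ := getElem?_expandTag_of_upper he
  have hij : i < j := by
    rcases hl x hx with ⟨-, _, -, -, hc⟩ | ⟨-, _, _, -, hij, -, hc⟩
    · simp [hcol] at hc
    · simp only [hcol, Sum.inr.injEq, Prod.mk.injEq] at hc
      omega
  refine ⟨x.size, i, j, hij, ?_, ?_⟩
  · simp [nuAt, List.getD_eq_getElem?_getD, he]
  · rw [nuAt, List.getD_eq_getElem?_getD, show b + 1 - 1 = b - 1 + 1 by omega, hnext]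
    rfl

lemma succR_iff_key_lt (x y : CPart) : succR n x y ↔ y.key n < x.key n := by
  rw [succR, CPart.key, CPart.key, Prod.Lex.toLex_lt_toLex, chi, colLE]
  split_ifs <;> omega

lemma key_shift_le_key_shift {x y : CPart} {m a b : ℤ} (hxy : x.key n ≤ (shift y m).key n)
    (hab : m + a ≤ b) : (shift x a).key n ≤ (shift y b).key n := by
  simp only [CPart.key, shift, Prod.Lex.toLex_le_toLex] at hxy ⊢
  omega

lemma key_alphaP_le (k : ℤ) {i j : ℕ} (hij : i ≤ j) :
    (alphaP k i j).key n ≤ (shift (betaP k i j) 1).key n := by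
  have : colKey n (Sum.inl i) ≤ colKey n (Sum.inl j) := by
    simp only [colKey]; gcongr
  unfold alphaP betaP
  split_ifs <;> simp only [CPart.key, shift, Prod.Lex.toLex_le_toLex] <;> omega

lemma key_nuAt_le_of_mem_Iset (hl : ∀ x ∈ l, inP n x ∨ inS n x)
    {b : ℕ} (hb : b ∈ Iset l) : (nuAt n l b).key n ≤ (shift (nuAt n l (b + 1)) 1).key n := by
  obtain ⟨k, i, j, hij, hα, hβ⟩ := exists_nuAt_eq_alphaP hl hb
  exact hα ▸ hβ ▸ key_alphaP_le k hij.le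

lemma brCond_mono_left {i i' u : ℕ} (hii' : i ≤ i') (h : brCond n l i u) : brCond n l i' u :=
  fun a ha hi'a hau => h a ha (hii'.trans hi'a) hau

lemma brCond_trans (hl : ∀ x ∈ l, inP n x ∨ inS n x) {i b u : ℕ} (hb : b ∈ Iset l)
    (hbu : b < u) (h₁ : brCond n l i b) (h₂ : brCond n l b u) :
    brCond n l i u := by
  intro i' hi' hii' hi'u
  rcases le_or_gt b i' with hbi' | hi'b
  · exact h₂ i' hi' hbi' hi'u
  rw [succR_iff_key_lt, not_lt]
  have hstop := h₂ b hb le_rfl hbu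
  rw [succR_iff_key_lt, not_lt] at hstop
  have hbu_le := (key_nuAt_le_of_mem_Iset hl hb).trans (key_shift_le_key_shift hstop le_rfl)
  have hfail := h₁ i' hi' hii' hi'b
  rw [succR_iff_key_lt, not_lt] at hfail
  exact hfail.trans (key_shift_le_key_shift hbu_le (by omega))

lemma nextJ_mem {i : ℕ} (hi : i ≤ elen l) :
    nextJ l i ∈ {x | i < x ∧ (x ∈ Jset l ∨ x = elen l + 1)} :=
  Nat.sInf_mem ⟨elen l + 1, by omega, Or.inr rfl⟩

lemma lt_nextJ {i : ℕ} (hi : i ≤ elen l) : i < nextJ l i := (nextJ_mem hi).1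

lemma nextJ_not_mem_Iset {i : ℕ} (hi : i ≤ elen l) : nextJ l i ∉ Iset l := by
  rintro ⟨-, htag⟩
  rcases (nextJ_mem hi).2 with ⟨-, hJ⟩ | hend
  · omega
  · rw [hend, tagAt_of_elen_lt (by omega)] at htag
    omega

lemma nextJ_eq_of_le_of_lt {i b : ℕ} (hib : i ≤ b) (hb : b < nextJ l i) :
    nextJ l b = nextJ l i := by
  have hne : {x | i < x ∧ (x ∈ Jset l ∨ x = elen l + 1)}.Nonempty := by
    by_contra hempty
    rw [Set.not_nonempty_iff_eq_empty] at hempty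
    rw [nextJ, hempty, Nat.sInf_empty] at hb
    omega
  have hmem := Nat.sInf_mem hne
  refine le_antisymm (Nat.sInf_le ⟨hb, hmem.2⟩) ?_
  exact le_csInf ⟨_, hb, hmem.2⟩ fun x hx => Nat.sInf_le ⟨hib.trans_lt hx.1, hx.2⟩

/-- The candidates for `Br_ν(i)` other than `i` itself: `j = nextJ l i` and the members of `S_i`. -/
def IsBridgeCandidate (n : ℕ) (l : List CPart) (i u : ℕ) : Prop :=
  i < u ∧ u ≤ nextJ l i ∧ (u ∈ Iset l ∨ u = nextJ l i) ∧ brCond n l i u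

lemma IsBridgeCandidate.of_le {i i' u : ℕ} (h : IsBridgeCandidate n l i u) (hii' : i ≤ i')
    (hi'u : i' < u) : IsBridgeCandidate n l i' u := by
  obtain ⟨-, huj, hu, hcond⟩ := h
  have hj : nextJ l i' = nextJ l i := nextJ_eq_of_le_of_lt hii' (hi'u.trans_le huj)
  exact ⟨hi'u, hj ▸ huj, hj ▸ hu, brCond_mono_left hii' hcond⟩

lemma IsBridgeCandidate.trans (hl : ∀ x ∈ l, inP n x ∨ inS n x) {i b u : ℕ}
    (hib : IsBridgeCandidate n l i b) (hb : b ∈ Iset l) (hbu : IsBridgeCandidate n l b u) :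
    IsBridgeCandidate n l i u := by
  obtain ⟨hib, hbj, -, hcond₁⟩ := hib
  obtain ⟨hbu, huj, hu, hcond₂⟩ := hbu
  have hbj' : b < nextJ l i := hbj.lt_of_ne fun h ↦
    nextJ_not_mem_Iset (hib.le.trans (le_elen_of_mem_Iset hb)) (h ▸ hb)
  have hj : nextJ l b = nextJ l i := nextJ_eq_of_le_of_lt hib.le hbj'
  exact ⟨hib.trans hbu, hj ▸ huj, hj ▸ hu, brCond_trans hl hb hbu hcond₁ hcond₂⟩

lemma isGreatest_Br {i : ℕ} (hi : i ≤ elen l) :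
    IsGreatest (insert i {u | IsBridgeCandidate n l i u}) (Br n l i) := by
  have hS : ∀ u, IsBridgeCandidate n l i u → ¬ brCond n l i (nextJ l i) →
      u ∈ {u | u ∈ Iset l ∧ i < u ∧ u < nextJ l i ∧ brCond n l i u} := by
    rintro u ⟨hiu, huj, hu | rfl, hcond⟩ hj
    · exact ⟨hu, hiu, huj.lt_of_ne (by rintro rfl; exact hj hcond), hcond⟩
    · exact absurd hcond hj
  have hbdd : BddAbove {u | u ∈ Iset l ∧ i < u ∧ u < nextJ l i ∧ brCond n l i u} :=
    ⟨nextJ l i, fun _ hu => hu.2.2.1.le⟩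
  unfold Br
  split_ifs with hj hne
  · refine ⟨Or.inr ⟨lt_nextJ hi, le_rfl, Or.inr rfl, hj⟩, ?_⟩
    rintro u (rfl | hu)
    exacts [(lt_nextJ hi).le, hu.2.1]
  · obtain ⟨hmI, him, hmj, hmcond⟩ := Nat.sSup_mem hne hbdd
    refine ⟨Or.inr ⟨him, hmj.le, Or.inl hmI, hmcond⟩, ?_⟩
    rintro u (rfl | hu)
    exacts [him.le, le_csSup hbdd (hS u hu hj)]
  · refine ⟨Set.mem_insert i _, ?_⟩
    rintro u (rfl | hu)
    exacts [le_rfl, absurd ⟨u, hS u hu hj⟩ hne]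

lemma Br_le_Br {i i' : ℕ} (hi' : i' ≤ elen l) (hii' : i ≤ i') : Br n l i ≤ Br n l i' := by
  obtain ⟨hmem, -⟩ := isGreatest_Br (n := n) (hii'.trans hi')
  obtain ⟨-, hub'⟩ := isGreatest_Br (n := n) hi'
  rcases hmem with hb | hcand
  · rw [hb]
    exact hii'.trans (hub' (Set.mem_insert i' _))
  rcases le_or_gt (Br n l i) i' with hle | hlt
  · exact hle.trans (hub' (Set.mem_insert i' _))
  · exact hub' (Or.inr (hcand.of_le hii' hlt))

lemma Br_Br (hl : ∀ x ∈ l, inP n x ∨ inS n x) {i : ℕ} (hi : i ≤ elen l)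
    (hbr : Br n l i ∈ Iset l) : Br n l (Br n l i) = Br n l i := by
  obtain ⟨hmem, hub⟩ := isGreatest_Br (n := n) hi
  rcases hmem with hb | hcand
  · rw [hb]
    exact hb
  obtain ⟨hmem', -⟩ := isGreatest_Br (n := n) (le_elen_of_mem_Iset hbr)
  rcases hmem' with hb' | hcand'
  · exact hb'
  · exact absurd (hub (Or.inr (hcand.trans hl hbr hcand'))) hcand'.1.not_ge

end

/-- For `ν ∈ E`, the Bridge function is non-decreasing on `I`, and
idempotent at indices whose Bridge lies in `I`. -/
theorem stmt_14 (n : ℕ) (ν : List CPart) (h : memE n ν) :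
    (∀ i ∈ Iset ν, ∀ i' ∈ Iset ν, i ≤ i' → Br n ν i ≤ Br n ν i') ∧
    (∀ i ∈ Iset ν, Br n ν i ∈ Iset ν → Br n ν (Br n ν i) = Br n ν i) :=
  ⟨fun _ _ _ hi' hii' => Br_le_Br (le_elen_of_mem_Iset hi') hii',
    fun _ hi hbr => Br_Br h.1 (le_elen_of_mem_Iset hi) hbr⟩
end

section
/- Let n = 4 with primary colors a < b < c < d. For every k ≥ 1, the three-part partitions ((k+2)_{cd}, (k+2)_{ab}, k_c) and ((k+2)_{cd}, (k+2)_{ab}, k_d) belong to E but not to E_1; for every k ≥ 2, the partition ((k+2)_{ad}, (k+1)_{bc}, k_a) belongs to E but not to E_1; and the partition (3_{ad}, 2_{bc}, 1_a) belongs to E_1. -/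
/-!
Each of these partitions consists of two secondary parts followed by a primary part, so its
expanded sequence has length 5 with `I = {1, 3}` and `J = {5}`. Hence `TS(ν) ⊆ {1}`, and `1 ∈ TS(ν)`
exactly when the first secondary part is not `▷` the second. In the three families the lower
halves `ν₂, ν₄` are too small to be `≻` the shifted primary part, so the bridge `Br_ν(1)` reaches
position 5 and the `E₁` condition asks for `(k+2)_p ≻ (k+2)_q`, which fails because `p ≤ q`.
For `(3_{ad}, 2_{bc}, 1_a)` the lower halves `1_d ≻ 1_c` and `1_b ≻ 1_a` block both candidates
3 and 5, so `Br_ν(1) = 1` and the condition is void.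
-/

@[simp] lemma colKey_inl (n i : ℕ) : colKey n (.inl i) = i * (n + 2) + (n + 1) := rfl

@[simp] lemma colKey_inr (n i j : ℕ) : colKey n (.inr (i, j)) = i * (n + 2) + j := rfl

section Order

variable {n : ℕ} {x y : CPart}

lemma succR_iff_of_colLE (h : colLE n x.col y.col) : succR n x y ↔ y.size < x.size := by
  rw [succR, chi, if_pos h]; omega

lemma succR_iff_of_not_colLE (h : ¬ colLE n x.col y.col) : succR n x y ↔ y.size ≤ x.size := by
  rw [succR, chi, if_neg h]; omega

lemma succeqR_iff_of_colLT (h : colLT n x.col y.col) : succeqR n x y ↔ y.size < x.size := by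
  rw [succeqR, chi, if_pos h]; omega

lemma succeqR_iff_of_not_colLT (h : ¬ colLT n x.col y.col) : succeqR n x y ↔ y.size ≤ x.size := by
  rw [succeqR, chi, if_neg h]; omega

lemma not_succR_of_size_lt (h : x.size < y.size) : ¬ succR n x y := by
  unfold succR chi; split_ifs <;> omega

lemma rtri_inr_inr_iff {s t : ℤ} {p q : ℕ × ℕ} :
    rtri n ⟨s, .inr p⟩ ⟨t, .inr q⟩ ↔ succR n ⟨s, .inr p⟩ ⟨t + 1, .inr q⟩ := by
  simp [rtri, isPri, shift]

end Order

lemma betaP_size (s : ℤ) (i j : ℕ) : (betaP s i j).size = s / 2 := by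
  unfold betaP; split_ifs <;> simp only; omega

lemma betaP_col (s : ℤ) (i j : ℕ) : (betaP s i j).col = .inl i ∨ (betaP s i j).col = .inl j := by
  unfold betaP; split_ifs <;> simp

def secSecPri (s t r : ℤ) (p q : ℕ × ℕ) (m : ℕ) : List CPart :=
  [⟨s, .inr p⟩, ⟨t, .inr q⟩, ⟨r, .inl m⟩]

section SecSecPri

variable {n : ℕ} {s t r : ℤ} {p q : ℕ × ℕ} {m : ℕ}

lemma tagAt_secSecPri_of_six_le {x : ℕ} (hx : 6 ≤ x) : tagAt (secSecPri s t r p q m) x = 3 := by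
  rw [tagAt, List.getD_eq_default]
  exact Nat.le_sub_one_of_lt hx

lemma mem_Iset_secSecPri {x : ℕ} : x ∈ Iset (secSecPri s t r p q m) ↔ x = 1 ∨ x = 3 := by
  refine ⟨fun ⟨h1, h2⟩ => ?_, by rintro (rfl | rfl) <;> exact ⟨by omega, rfl⟩⟩
  rcases lt_or_ge x 6 with h | h
  · interval_cases x <;> simp_all [tagAt, expandTag, secSecPri]
  · simp [tagAt_secSecPri_of_six_le h] at h2

lemma mem_Jset_secSecPri {x : ℕ} : x ∈ Jset (secSecPri s t r p q m) ↔ x = 5 := by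
  refine ⟨fun ⟨h1, h2⟩ => ?_, by rintro rfl; exact ⟨by omega, rfl⟩⟩
  rcases lt_or_ge x 6 with h | h
  · interval_cases x <;> simp_all [tagAt, expandTag, secSecPri]
  · simp [tagAt_secSecPri_of_six_le h] at h2

lemma nextJ_secSecPri_one : nextJ (secSecPri s t r p q m) 1 = 5 := by
  have h5 : 5 ∈ {x | 1 < x ∧
      (x ∈ Jset (secSecPri s t r p q m) ∨ x = elen (secSecPri s t r p q m) + 1)} :=
    ⟨by omega, .inl (mem_Jset_secSecPri.2 rfl)⟩
  refine le_antisymm (Nat.sInf_le h5) (le_csInf ⟨5, h5⟩ ?_)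
  rintro x ⟨-, hx | hx⟩
  · exact (mem_Jset_secSecPri.1 hx).ge
  · have : elen (secSecPri s t r p q m) = 5 := rfl
    omega

lemma nuAt_secSecPri_two : nuAt n (secSecPri s t r p q m) 2 = betaP s p.1 p.2 := rfl

lemma nuAt_secSecPri_three : nuAt n (secSecPri s t r p q m) 3 = alphaP t q.1 q.2 := rfl

lemma nuAt_secSecPri_four : nuAt n (secSecPri s t r p q m) 4 = betaP t q.1 q.2 := rfl

lemma nuAt_secSecPri_five : nuAt n (secSecPri s t r p q m) 5 = ⟨r, .inl m⟩ := rfl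

lemma origAt_secSecPri_one : origAt n (secSecPri s t r p q m) 1 = ⟨s, .inr p⟩ := rfl

lemma mem_TSet_secSecPri {i : ℕ} :
    i ∈ TSet n (secSecPri s t r p q m) ↔ i = 1 ∧ ¬ rtri n ⟨s, .inr p⟩ ⟨t, .inr q⟩ := by
  constructor
  · rintro ⟨hi, hi2, hrt, -⟩
    obtain rfl : i = 1 := by rw [mem_Iset_secSecPri] at hi hi2; omega
    exact ⟨rfl, hrt⟩
  · rintro ⟨rfl, hrt⟩
    exact ⟨mem_Iset_secSecPri.2 (.inl rfl), mem_Iset_secSecPri.2 (.inr rfl), hrt, .inl rfl⟩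

lemma brCond_secSecPri_one_five : brCond n (secSecPri s t r p q m) 1 5 ↔
    ¬ succR n (betaP s p.1 p.2) ⟨r + 1, .inl m⟩ ∧ ¬ succR n (betaP t q.1 q.2) ⟨r, .inl m⟩ := by
  have h1 : 1 ∈ Iset (secSecPri s t r p q m) := mem_Iset_secSecPri.2 (.inl rfl)
  have h3 : 3 ∈ Iset (secSecPri s t r p q m) := mem_Iset_secSecPri.2 (.inr rfl)
  constructor
  · intro h
    constructor
    · simpa [shift, nuAt_secSecPri_two, nuAt_secSecPri_five] using h 1 h1 le_rfl (by norm_num)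
    · simpa [shift, nuAt_secSecPri_four, nuAt_secSecPri_five] using h 3 h3 (by decide) (by decide)
  · rintro ⟨hs, ht⟩ i' hi' - -
    rcases mem_Iset_secSecPri.1 hi' with rfl | rfl
    · simpa [shift, nuAt_secSecPri_two, nuAt_secSecPri_five] using hs
    · simpa [shift, nuAt_secSecPri_four, nuAt_secSecPri_five] using ht

lemma brCond_secSecPri_one_three : brCond n (secSecPri s t r p q m) 1 3 ↔
    ¬ succR n (betaP s p.1 p.2) (alphaP t q.1 q.2) := by
  constructor
  · intro h
    simpa [shift, nuAt_secSecPri_two, nuAt_secSecPri_three] using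
      h 1 (mem_Iset_secSecPri.2 (.inl rfl)) le_rfl (by norm_num)
  · rintro hs i' hi' - hi'3
    obtain rfl : i' = 1 := by rcases mem_Iset_secSecPri.1 hi' with h | h <;> omega
    simpa [shift, nuAt_secSecPri_two, nuAt_secSecPri_three] using hs

lemma not_memE1_secSecPri (hrt : ¬ rtri n ⟨s, .inr p⟩ ⟨t, .inr q⟩)
    (hbr : brCond n (secSecPri s t r p q m) 1 5) (h : ¬ succR n ⟨s, .inr p⟩ ⟨r + 2, .inl m⟩) :
    ¬ memE1 n (secSecPri s t r p q m) := by
  rintro ⟨-, hE1⟩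
  have hBr : Br n (secSecPri s t r p q m) 1 = 5 := by rw [Br, nextJ_secSecPri_one, if_pos hbr]
  have := hE1 1 (mem_TSet_secSecPri.2 ⟨rfl, hrt⟩) (by omega)
  rw [hBr] at this
  exact h (by simpa [shift, nuAt_secSecPri_five, origAt_secSecPri_one] using this)

lemma memE1_secSecPri (hE : memE n (secSecPri s t r p q m))
    (h5 : ¬ brCond n (secSecPri s t r p q m) 1 5) (h3 : ¬ brCond n (secSecPri s t r p q m) 1 3) :
    memE1 n (secSecPri s t r p q m) := by
  have hBr : Br n (secSecPri s t r p q m) 1 = 1 := by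
    rw [Br, nextJ_secSecPri_one, if_neg h5, if_neg]
    rintro ⟨u, hu, h1u, hu5, hbr⟩
    obtain rfl : u = 3 := by rcases mem_Iset_secSecPri.1 hu with h | h <;> omega
    exact h3 hbr
  refine ⟨hE, fun i hi hlt => ?_⟩
  obtain ⟨rfl, -⟩ := mem_TSet_secSecPri.1 hi
  omega

lemma memE_secSecPri (hs : inS n ⟨s, .inr p⟩) (ht : inS n ⟨t, .inr q⟩) (hr : inP n ⟨r, .inl m⟩)
    (hst : gg n ⟨s, .inr p⟩ ⟨t, .inr q⟩) (htr : gg n ⟨t, .inr q⟩ ⟨r, .inl m⟩) :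
    memE n (secSecPri s t r p q m) := by
  refine ⟨?_, List.isChain_cons_cons.2 ⟨hst, List.isChain_pair.2 htr⟩⟩
  simp only [secSecPri, List.mem_cons, List.not_mem_nil, or_false]
  rintro x (rfl | rfl | rfl)
  exacts [.inr hs, .inr ht, .inl hr]

end SecSecPri

lemma colLE_inl_inl {n i j : ℕ} (h : i ≤ j) : colLE n (.inl i) (.inl j) := by
  simp only [colLE, colKey_inl]
  gcongr

lemma not_succR_betaP {n i j m : ℕ} {s r : ℤ} (him : i ≤ m) (hjm : j ≤ m) (h : s / 2 ≤ r) :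
    ¬ succR n (betaP s i j) ⟨r, .inl m⟩ := by
  have hcol : colLE n (betaP s i j).col (.inl m) := by
    rcases betaP_col s i j with hc | hc <;> rw [hc]
    exacts [colLE_inl_inl him, colLE_inl_inl hjm]
  rw [succR_iff_of_colLE hcol, betaP_size]
  exact h.not_gt

section FourColors

variable {k : ℤ} {m : ℕ}

lemma memE_cd_ab (hk : 1 ≤ k) (hm : 1 ≤ m) (hm4 : m ≤ 4) :
    memE 4 (secSecPri (k + 2) (k + 2) k (3, 4) (1, 2) m) := by
  refine memE_secSecPri ⟨by dsimp only; omega, 3, 4, by omega, by omega, le_rfl, rfl⟩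
    ⟨by dsimp only; omega, 1, 2, le_rfl, by omega, by omega, rfl⟩ ⟨hk, m, hm, hm4, rfl⟩
    (.inr (.inr ⟨.inl (by decide), ?_⟩)) (.inl ⟨.inr ⟨m, rfl⟩, ?_⟩)
  · exact (succR_iff_of_not_colLE (by simp [colLE])).2 le_rfl
  · exact (succeqR_iff_of_colLT (by simp [colLT, shift]; omega)).2 (by simp [shift])

lemma not_memE1_cd_ab (hk : 1 ≤ k) (hm : 3 ≤ m) :
    ¬ memE1 4 (secSecPri (k + 2) (k + 2) k (3, 4) (1, 2) m) := by
  refine not_memE1_secSecPri ?_ ?_ ?_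
  · rw [rtri_inr_inr_iff, succR_iff_of_not_colLE (by simp [colLE])]
    dsimp only
    omega
  · rw [brCond_secSecPri_one_five]
    exact ⟨not_succR_of_size_lt (by rw [betaP_size]; dsimp only; omega),
      not_succR_betaP (by omega) (by omega) (by omega)⟩
  · rw [succR_iff_of_colLE (by simp [colLE]; omega)]
    simp

lemma memE_ad_bc (hk : 1 ≤ k) : memE 4 (secSecPri (k + 2) (k + 1) k (1, 4) (2, 3) 1) := by
  refine memE_secSecPri ⟨by dsimp only; omega, 1, 4, le_rfl, by omega, le_rfl, rfl⟩
    ⟨by dsimp only; omega, 2, 3, by omega, by omega, by omega, rfl⟩ ⟨hk, 1, le_rfl, by omega, rfl⟩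
    (.inr (.inr ⟨.inr (by decide), ?_⟩)) (.inl ⟨.inr ⟨1, rfl⟩, ?_⟩)
  · exact (succR_iff_of_colLE (by simp [colLE])).2 (by simp)
  · exact (succeqR_iff_of_not_colLT (by simp [colLT, shift])).2 (by simp [shift])

lemma not_memE1_ad_bc (hk : 2 ≤ k) : ¬ memE1 4 (secSecPri (k + 2) (k + 1) k (1, 4) (2, 3) 1) := by
  refine not_memE1_secSecPri ?_ ?_ ?_
  · rw [rtri_inr_inr_iff, succR_iff_of_colLE (by simp [colLE])]
    dsimp only
    omega
  · rw [brCond_secSecPri_one_five]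
    exact ⟨not_succR_of_size_lt (by rw [betaP_size]; dsimp only; omega),
      not_succR_of_size_lt (by rw [betaP_size]; dsimp only; omega)⟩
  · rw [succR_iff_of_colLE (by simp [colLE])]
    simp

lemma memE1_ad_bc : memE1 4 (secSecPri 3 2 1 (1, 4) (2, 3) 1) := by
  refine memE1_secSecPri (memE_ad_bc le_rfl) ?_ ?_
  · rw [brCond_secSecPri_one_five, not_and, not_not]
    intro
    change succR 4 ⟨1, .inl 2⟩ ⟨1, .inl 1⟩
    exact (succR_iff_of_not_colLE (by simp [colLE])).2 le_rfl
  · rw [brCond_secSecPri_one_three, not_not]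
    change succR 4 ⟨1, .inl 4⟩ ⟨1, .inl 3⟩
    exact (succR_iff_of_not_colLE (by simp [colLE])).2 le_rfl

end FourColors

/-- (n = 4, colors `a,b,c,d = a_1,a_2,a_3,a_4`.) The patterns
`((k+2)_{cd}, (k+2)_{ab}, k_c)` and `((k+2)_{cd}, (k+2)_{ab}, k_d)` for `k ≥ 1`, and
`((k+2)_{ad}, (k+1)_{bc}, k_a)` for `k ≥ 2`, are in `E` but not `E₁`; the partition
`(3_{ad}, 2_{bc}, 1_a)` is in `E₁`. -/
theorem stmt_17 :
    (∀ k : ℤ, 1 ≤ k →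
      (memE 4 [⟨k + 2, Sum.inr (3, 4)⟩, ⟨k + 2, Sum.inr (1, 2)⟩, ⟨k, Sum.inl 3⟩] ∧
        ¬ memE1 4 [⟨k + 2, Sum.inr (3, 4)⟩, ⟨k + 2, Sum.inr (1, 2)⟩, ⟨k, Sum.inl 3⟩]) ∧
      (memE 4 [⟨k + 2, Sum.inr (3, 4)⟩, ⟨k + 2, Sum.inr (1, 2)⟩, ⟨k, Sum.inl 4⟩] ∧
        ¬ memE1 4 [⟨k + 2, Sum.inr (3, 4)⟩, ⟨k + 2, Sum.inr (1, 2)⟩, ⟨k, Sum.inl 4⟩])) ∧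
    (∀ k : ℤ, 2 ≤ k →
      memE 4 [⟨k + 2, Sum.inr (1, 4)⟩, ⟨k + 1, Sum.inr (2, 3)⟩, ⟨k, Sum.inl 1⟩] ∧
        ¬ memE1 4 [⟨k + 2, Sum.inr (1, 4)⟩, ⟨k + 1, Sum.inr (2, 3)⟩, ⟨k, Sum.inl 1⟩]) ∧
    memE1 4 [⟨3, Sum.inr (1, 4)⟩, ⟨2, Sum.inr (2, 3)⟩, ⟨1, Sum.inl 1⟩] :=
  ⟨fun _ hk => ⟨⟨memE_cd_ab hk (by norm_num) (by norm_num), not_memE1_cd_ab hk le_rfl⟩,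
      ⟨memE_cd_ab hk (by norm_num) le_rfl, not_memE1_cd_ab hk (by norm_num)⟩⟩,
    fun _ hk => ⟨memE_ad_bc (by omega), not_memE1_ad_bc hk⟩, memE1_ad_bc⟩
end

section
/- Let n = 5 with primary colors a < b < c < d < e. For every pair of secondary parts k_p and l_q (sizes at least 2) with k_p ≫ l_q and such that (k_p, l_q) is not of the form (h_{cd}, h_{ab}) for some integer h, there exists an integer h such that k_p ≻ h_{cd} and h_{cd} ⪰ l_q. -/
/-!
The witness can always be taken to be `h = l + χ(cd < q)`, which makes `h_{cd} ⪰ l_q` immediate.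
If `(p, q) ∉ SP`, then `k_p ≻ (l+1)_q` leaves room to insert any color between the two parts.
If `(p, q) ∈ SP` one only has `k_p ≻ l_q`, and the argument rests on where `cd` sits among the
secondary colors when `n = 5`: every special pair has `q ≤ cd` (so `h = l`), and `p ≤ cd` forces
`p ≤ q` unless `(p, q) = (cd, ab)`.
-/

section Between

variable (n : ℕ)

lemma chi_nonneg (P : Prop) : 0 ≤ chi P := by
  unfold chi; split_ifs <;> omega

lemma colLE_trans_colLT {p m q : Col} (hpm : colLE n p m) (hmq : colLT n m q) :
    colLE n p q := by
  unfold colLE colLT at *; omega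

lemma exists_between_of_succR_shift_one {x y : CPart} (hxy : succR n x (shift y 1))
    (m : Col) : ∃ h : ℤ, succR n x ⟨h, m⟩ ∧ succeqR n ⟨h, m⟩ y := by
  refine ⟨y.size + chi (colLT n m y.col), ?_, by simp [succeqR]⟩
  have hpq : colLE n x.col m → colLT n m y.col → colLE n x.col y.col :=
    colLE_trans_colLT n
  simp only [succR, shift, chi] at hxy ⊢
  split_ifs at hxy ⊢ <;> simp_all <;> omega

lemma exists_between_of_succR {x y : CPart} (hxy : succR n x y) {m : Col}
    (hym : colLE n y.col m) (hxm : colLE n x.col m → colLE n x.col y.col ∨ x.size ≠ y.size) :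
    ∃ h : ℤ, succR n x ⟨h, m⟩ ∧ succeqR n ⟨h, m⟩ y := by
  refine ⟨y.size, ?_, ?_⟩
  · have := chi_nonneg (colLE n x.col y.col)
    simp only [succR, chi] at hxy ⊢
    split_ifs at hxy ⊢ <;> simp_all <;> omega
  · have hmy : ¬ colLT n m y.col := by unfold colLE colLT at *; omega
    simp [succeqR, chi, hmy]

end Between

lemma SP_five_colLE_cd {r s x y : ℕ} (hSP : SP (Sum.inr (r, s)) (Sum.inr (x, y)))
    (hx : 1 ≤ x) (hs : s ≤ 5) :
    colLE 5 (Sum.inr (x, y)) (Sum.inr (3, 4)) ∧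
      (colLE 5 (Sum.inr (r, s)) (Sum.inr (3, 4)) →
        colLE 5 (Sum.inr (r, s)) (Sum.inr (x, y)) ∨ (r = 3 ∧ s = 4 ∧ x = 1 ∧ y = 2)) := by
  simp only [SP, colLE, colKey] at *
  omega

theorem stmt_18_general (r s x y : ℕ) (hs : s ≤ 5) (hx : 1 ≤ x) (k l : ℤ)
    (hgg : gg 5 ⟨k, Sum.inr (r, s)⟩ ⟨l, Sum.inr (x, y)⟩)
    (hnot : ¬(r = 3 ∧ s = 4 ∧ x = 1 ∧ y = 2 ∧ k = l)) :
    ∃ h : ℤ, succR 5 ⟨k, Sum.inr (r, s)⟩ ⟨h, Sum.inr (3, 4)⟩ ∧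
      succeqR 5 ⟨h, Sum.inr (3, 4)⟩ ⟨l, Sum.inr (x, y)⟩ := by
  rcases hgg with ⟨hpri, -⟩ | ⟨-, -, hshift⟩ | ⟨hSP, hsucc⟩
  · simp [isPri] at hpri
  · exact exists_between_of_succR_shift_one 5 hshift _
  · obtain ⟨hq, hp⟩ := SP_five_colLE_cd hSP hx hs
    refine exists_between_of_succR 5 hsucc hq fun hpm => ?_
    rcases hp hpm with hpq | ⟨rfl, rfl, rfl, rfl⟩
    · exact Or.inl hpq
    · exact Or.inr fun hkl => hnot ⟨rfl, rfl, rfl, rfl, hkl⟩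

/-- (n = 5.) For secondary parts `k_p ≫ l_q` with `(k_p, l_q)` not of
the form `(h_{cd}, h_{ab})`, there is an integer `h` with `k_p ≻ h_{cd}` and `h_{cd} ⪰ l_q`. -/
theorem stmt_18 (r s x y : ℕ) (hr : 1 ≤ r) (hrs : r < s) (hs : s ≤ 5)
    (hx : 1 ≤ x) (hxy : x < y) (hy : y ≤ 5) (k l : ℤ) (hk : 2 ≤ k) (hl : 2 ≤ l)
    (hgg : gg 5 ⟨k, Sum.inr (r, s)⟩ ⟨l, Sum.inr (x, y)⟩)
    (hnot : ¬(r = 3 ∧ s = 4 ∧ x = 1 ∧ y = 2 ∧ k = l)) :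
    ∃ h : ℤ, succR 5 ⟨k, Sum.inr (r, s)⟩ ⟨h, Sum.inr (3, 4)⟩ ∧
      succeqR 5 ⟨h, Sum.inr (3, 4)⟩ ⟨l, Sum.inr (x, y)⟩ :=
  stmt_18_general r s x y hs hx k l hgg hnot
end
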